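/- Let 1 ≤ p, q, r ≤ ∞ with 1/p = 1/q + 1/r, and let E, F be Banach lattices. If P : E → F is a positive weakly (q,r)-dominated m-homogeneous polynomial, u : G → E and v : F → H are positive bounded linear operators, then v ∘ P ∘ u is positive weakly (q,r)-dominated and d⁺(v ∘ P ∘ u) ≤ ‖v‖ · d⁺(P) · ‖u‖^m. -/

import Mathlib

open scoped BigOperators

section

/-- A functional on a Banach lattice is positive if it is nonnegative on the positive cone. -/
def IsPosFunc {F : Type*} [NormedAddCommGroup F] [Lattice F] [HasSolidNorm F] [IsOrderedAddMonoid F] [NormedSpace ℝ F]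
    (f : F →L[ℝ] ℝ) : Prop := ∀ y : F, 0 ≤ y → 0 ≤ f y

/-- `sup_{y** ∈ B⁺_{F**}} (∑ᵢ ⟨y_i*, y**⟩^r)^{1/r}`. -/
noncomputable def posBidualBallSup {F : Type*} [NormedAddCommGroup F] [Lattice F] [HasSolidNorm F] [IsOrderedAddMonoid F]
    [NormedSpace ℝ F] (r : ℝ) {n : ℕ} (y : Fin n → F →L[ℝ] ℝ) : ℝ :=
  ⨆ Φ : {Φ : (F →L[ℝ] ℝ) →L[ℝ] ℝ // ‖Φ‖ ≤ 1 ∧ ∀ g, IsPosFunc g → 0 ≤ Φ g},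
    (∑ i, (Φ.1 (y i)) ^ r) ^ (1 / r)

/-- `sup_{φ ∈ B⁺_{P^r(^mE)}} (∑ᵢ φ(x_i)^q)^{1/q}`: supremum over the positive part of the
unit ball of the `m`-homogeneous polynomial forms on `E` (represented by their associated
`m`-linear maps, with the polynomial sup-norm on the unit ball). -/
noncomputable def posPolyBallSup {E : Type*} [NormedAddCommGroup E] [Lattice E] [HasSolidNorm E] [IsOrderedAddMonoid E] [NormedSpace ℝ E]
    (m : ℕ) (q : ℝ) {n : ℕ} (x : Fin n → E) : ℝ :=
  ⨆ φ : {φ : ContinuousMultilinearMap ℝ (fun _ : Fin m => E) ℝ //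
      (∀ z : E, ‖z‖ ≤ 1 → |φ (fun _ => z)| ≤ 1) ∧ (∀ z : E, 0 ≤ z → 0 ≤ φ (fun _ => z))},
    (∑ i, (φ.1 (fun _ => x i)) ^ q) ^ (1 / q)

/-- The `m`-homogeneous polynomial `x ↦ M(x,…,x)` is positive weakly `(q,r)`-dominated
with constant `C`. -/
def PWDPolyC {E F : Type*} [NormedAddCommGroup E] [Lattice E] [HasSolidNorm E] [IsOrderedAddMonoid E] [NormedSpace ℝ E]
    [NormedAddCommGroup F] [Lattice F] [HasSolidNorm F] [IsOrderedAddMonoid F] [NormedSpace ℝ F] (m : ℕ) (p q r : ℝ)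
    (M : ContinuousMultilinearMap ℝ (fun _ : Fin m => E) F) (C : ℝ) : Prop :=
  ∀ (n : ℕ) (x : Fin n → E) (y : Fin n → F →L[ℝ] ℝ),
    (∀ i, 0 ≤ x i) → (∀ i, IsPosFunc (y i)) →
    (∑ i, ((y i) (M (fun _ => x i))) ^ p) ^ (1 / p) ≤
      C * posPolyBallSup m q x * posBidualBallSup r y

/-- `d⁺(P)` for the polynomial `x ↦ M(x,…,x)`. -/
noncomputable def dplusPoly {E F : Type*} [NormedAddCommGroup E] [Lattice E] [HasSolidNorm E] [IsOrderedAddMonoid E] [NormedSpace ℝ E]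
    [NormedAddCommGroup F] [Lattice F] [HasSolidNorm F] [IsOrderedAddMonoid F] [NormedSpace ℝ F] (m : ℕ) (p q r : ℝ)
    (M : ContinuousMultilinearMap ℝ (fun _ : Fin m => E) F) : ℝ :=
  sInf {C : ℝ | 0 ≤ C ∧ PWDPolyC m p q r M C}

/-!
Precomposition with `u` maps a positive form `φ` of the positive unit ball to a positive form
bounded by `‖u‖ ^ m` on the unit ball, i.e. to `‖u‖ ^ m` times a member of that ball; dually,
precomposition with the adjoint of `v` maps the positive unit ball of the bidual into `‖v‖` times
itself. Feeding `u xᵢ` and `yᵢ* ∘ v` into the domination inequality of `P` therefore gives it for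
`v ∘ P ∘ u` with constant `‖v‖ C ‖u‖ ^ m`, and taking infima over `C` bounds `d⁺(v ∘ P ∘ u)`.
-/

theorem sum_const_mul_rpow_rpow_one_div {ι : Type*} (s : Finset ι) {c q : ℝ} (hc : 0 ≤ c)
    (hq : q ≠ 0) (t : ι → ℝ) (ht : ∀ i ∈ s, 0 ≤ t i) :
    (∑ i ∈ s, (c * t i) ^ q) ^ (1 / q) = c * (∑ i ∈ s, t i ^ q) ^ (1 / q) := by
  rw [Finset.sum_congr rfl fun i hi => Real.mul_rpow hc (ht i hi), ← Finset.mul_sum,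
    Real.mul_rpow (by positivity) (Finset.sum_nonneg fun i hi => Real.rpow_nonneg (ht i hi) q),
    ← Real.rpow_mul hc, mul_one_div_cancel hq, Real.rpow_one]

theorem ContinuousMultilinearMap.abs_apply_diag_le_norm_pow {E : Type*} [NormedAddCommGroup E]
    [NormedSpace ℝ E] {m : ℕ} (φ : ContinuousMultilinearMap ℝ (fun _ : Fin m => E) ℝ)
    (hφ : ∀ z : E, ‖z‖ ≤ 1 → |φ (fun _ => z)| ≤ 1) (w : E) :
    |φ (fun _ => w)| ≤ ‖w‖ ^ m := by
  rcases eq_or_ne w 0 with rfl | hw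
  · rcases Nat.eq_zero_or_pos m with rfl | hm
    · simpa using hφ 0 (by simp)
    · simp [φ.map_coord_zero (m := fun _ => 0) ⟨0, hm⟩ rfl, zero_pow hm.ne']
  · have hw' : ‖w‖ ≠ 0 := norm_ne_zero_iff.mpr hw
    have hscale : φ (fun _ => w) = ‖w‖ ^ m * φ (fun _ => ‖w‖⁻¹ • w) := by
      simpa [smul_inv_smul₀ hw'] using φ.map_smul_univ (fun _ => ‖w‖) (fun _ => ‖w‖⁻¹ • w)
    have hunit : ‖‖w‖⁻¹ • w‖ ≤ 1 := by rw [norm_smul, norm_inv, norm_norm, inv_mul_cancel₀ hw']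
    rw [hscale, abs_mul, abs_of_nonneg (by positivity)]
    exact mul_le_of_le_one_right (by positivity) (hφ _ hunit)

theorem posPolyBallSup_bddAbove {E : Type*} [NormedAddCommGroup E] [Preorder E] [NormedSpace ℝ E]
    {m n : ℕ} {q : ℝ} (hq : 0 ≤ q) {x : Fin n → E} (hx : ∀ i, 0 ≤ x i) :
    BddAbove (Set.range fun φ : {φ : ContinuousMultilinearMap ℝ (fun _ : Fin m => E) ℝ //
      (∀ z : E, ‖z‖ ≤ 1 → |φ (fun _ => z)| ≤ 1) ∧ (∀ z : E, 0 ≤ z → 0 ≤ φ (fun _ => z))} =>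
      (∑ i, (φ.1 (fun _ => x i)) ^ q) ^ (1 / q)) := by
  refine ⟨(∑ i, (‖x i‖ ^ m) ^ q) ^ (1 / q), ?_⟩
  rintro _ ⟨⟨φ, hball, hpos⟩, rfl⟩
  refine Real.rpow_le_rpow (Finset.sum_nonneg fun i _ => by have := hpos _ (hx i); positivity)
    (Finset.sum_le_sum fun i _ => Real.rpow_le_rpow (hpos _ (hx i)) ?_ hq) (by positivity)
  exact (le_abs_self _).trans (φ.abs_apply_diag_le_norm_pow hball (x i))

section Composition

variable {E F G H : Type*}
  [NormedAddCommGroup E] [Lattice E] [HasSolidNorm E] [IsOrderedAddMonoid E] [NormedSpace ℝ E]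
  [NormedAddCommGroup F] [Lattice F] [HasSolidNorm F] [IsOrderedAddMonoid F] [NormedSpace ℝ F]
  [NormedAddCommGroup G] [Lattice G] [HasSolidNorm G] [IsOrderedAddMonoid G] [NormedSpace ℝ G]
  [NormedAddCommGroup H] [Lattice H] [HasSolidNorm H] [IsOrderedAddMonoid H] [NormedSpace ℝ H]
  {m n : ℕ} {p q r : ℝ}

theorem posBidualBallSup_bddAbove (hr : 0 ≤ r) {y : Fin n → F →L[ℝ] ℝ}
    (hy : ∀ i, IsPosFunc (y i)) :
    BddAbove (Set.range fun Φ : {Φ : (F →L[ℝ] ℝ) →L[ℝ] ℝ //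
      ‖Φ‖ ≤ 1 ∧ ∀ g, IsPosFunc g → 0 ≤ Φ g} => (∑ i, (Φ.1 (y i)) ^ r) ^ (1 / r)) := by
  refine ⟨(∑ i, ‖y i‖ ^ r) ^ (1 / r), ?_⟩
  rintro _ ⟨⟨Φ, hball, hpos⟩, rfl⟩
  refine Real.rpow_le_rpow (Finset.sum_nonneg fun i _ => by have := hpos _ (hy i); positivity)
    (Finset.sum_le_sum fun i _ => Real.rpow_le_rpow (hpos _ (hy i)) ?_ hr) (by positivity)
  exact (le_abs_self _).trans <|
    (Φ.le_opNorm (y i)).trans (mul_le_of_le_one_left (norm_nonneg _) hball)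

theorem posPolyBallSup_nonneg {x : Fin n → E} (hx : ∀ i, 0 ≤ x i) :
    0 ≤ posPolyBallSup m q x :=
  Real.iSup_nonneg fun φ => Real.rpow_nonneg
    (Finset.sum_nonneg fun i _ => Real.rpow_nonneg (φ.2.2 _ (hx i)) q) _

theorem posBidualBallSup_nonneg {y : Fin n → F →L[ℝ] ℝ} (hy : ∀ i, IsPosFunc (y i)) :
    0 ≤ posBidualBallSup r y :=
  Real.iSup_nonneg fun Φ => Real.rpow_nonneg
    (Finset.sum_nonneg fun i _ => Real.rpow_nonneg (Φ.2.2 _ (hy i)) r) _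

theorem diag_sum_le_mul_posPolyBallSup (hq : 0 < q)
    {φ : ContinuousMultilinearMap ℝ (fun _ : Fin m => E) ℝ} {c : ℝ} (hc : 0 ≤ c)
    (hφ : ∀ z, |φ (fun _ => z)| ≤ c * ‖z‖ ^ m) (hφpos : ∀ z : E, 0 ≤ z → 0 ≤ φ (fun _ => z))
    {x : Fin n → E} (hx : ∀ i, 0 ≤ x i) :
    (∑ i, (φ (fun _ => x i)) ^ q) ^ (1 / q) ≤ c * posPolyBallSup m q x := by
  set ψ := c⁻¹ • φ
  have hψ : ∀ z, φ (fun _ => z) = c * ψ (fun _ => z) := fun z => by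
    rcases hc.eq_or_lt with rfl | hc
    · simpa using hφ z
    · simp [ψ, hc.ne']
  have hψball : ∀ z : E, ‖z‖ ≤ 1 → |ψ (fun _ => z)| ≤ 1 := fun z hz => by
    calc |ψ (fun _ => z)| = c⁻¹ * |φ (fun _ => z)| := by simp [ψ, abs_mul, hc]
      _ ≤ c⁻¹ * (c * ‖z‖ ^ m) := by gcongr; exact hφ z
      _ ≤ 1 := by
        rw [← mul_assoc]
        exact mul_le_one₀ inv_mul_le_one (by positivity) (pow_le_one₀ (norm_nonneg z) hz)
  have hψpos : ∀ z : E, 0 ≤ z → 0 ≤ ψ (fun _ => z) := fun z hz => by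
    simpa [ψ] using mul_nonneg (inv_nonneg.mpr hc) (hφpos z hz)
  simp only [hψ]
  rw [sum_const_mul_rpow_rpow_one_div _ hc hq.ne' _ fun i _ => hψpos _ (hx i)]
  exact mul_le_mul_of_nonneg_left
    (le_ciSup (posPolyBallSup_bddAbove hq.le hx) ⟨ψ, hψball, hψpos⟩) hc

theorem sum_le_mul_posBidualBallSup (hr : 0 < r) {Φ : (F →L[ℝ] ℝ) →L[ℝ] ℝ} {c : ℝ}
    (hΦ : ‖Φ‖ ≤ c) (hΦpos : ∀ g, IsPosFunc g → 0 ≤ Φ g) {y : Fin n → F →L[ℝ] ℝ}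
    (hy : ∀ i, IsPosFunc (y i)) :
    (∑ i, (Φ (y i)) ^ r) ^ (1 / r) ≤ c * posBidualBallSup r y := by
  have hc : 0 ≤ c := (norm_nonneg Φ).trans hΦ
  set Ψ := c⁻¹ • Φ
  have hΨ : Φ = c • Ψ := by
    rcases hc.eq_or_lt with rfl | hc
    · simp [(Φ.opNorm_zero_iff).mp (le_antisymm hΦ (norm_nonneg Φ))]
    · simp [Ψ, smul_inv_smul₀ hc.ne']
  have hΨball : ‖Ψ‖ ≤ 1 := by
    calc ‖Ψ‖ ≤ ‖c⁻¹‖ * ‖Φ‖ := ContinuousLinearMap.opNorm_smul_le _ _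
      _ ≤ c⁻¹ * c := by rw [Real.norm_of_nonneg (inv_nonneg.mpr hc)]; gcongr
      _ ≤ 1 := inv_mul_le_one
  have hΨpos : ∀ g, IsPosFunc g → 0 ≤ Ψ g := fun g hg =>
    mul_nonneg (inv_nonneg.mpr hc) (hΦpos g hg)
  simp only [hΨ, smul_apply, smul_eq_mul]
  rw [sum_const_mul_rpow_rpow_one_div _ hc hr.ne' _ fun i _ => hΨpos _ (hy i)]
  exact mul_le_mul_of_nonneg_left
    (le_ciSup (posBidualBallSup_bddAbove hr.le hy) ⟨Ψ, hΨball, hΨpos⟩) hc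

theorem posPolyBallSup_comp_le (hq : 0 < q) {x : Fin n → G} (hx : ∀ i, 0 ≤ x i)
    {u : G →L[ℝ] E} (hu : ∀ z : G, 0 ≤ z → 0 ≤ u z) :
    posPolyBallSup m q (fun i => u (x i)) ≤ ‖u‖ ^ m * posPolyBallSup m q x := by
  have : Nonempty {φ : ContinuousMultilinearMap ℝ (fun _ : Fin m => E) ℝ //
      (∀ z : E, ‖z‖ ≤ 1 → |φ (fun _ => z)| ≤ 1) ∧ (∀ z : E, 0 ≤ z → 0 ≤ φ (fun _ => z))} :=
    ⟨⟨0, by simp, by simp⟩⟩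
  refine ciSup_le fun ⟨φ, hball, hpos⟩ => ?_
  refine diag_sum_le_mul_posPolyBallSup (φ := φ.compContinuousLinearMap fun _ => u) hq
    (by positivity) (fun z => ?_) (fun z hz => hpos _ (hu z hz)) hx
  calc |φ (fun _ => u z)| ≤ ‖u z‖ ^ m := φ.abs_apply_diag_le_norm_pow hball (u z)
    _ ≤ (‖u‖ * ‖z‖) ^ m := by gcongr; exact u.le_opNorm z
    _ = ‖u‖ ^ m * ‖z‖ ^ m := mul_pow _ _ _

theorem posBidualBallSup_comp_le (hr : 0 < r) {y : Fin n → H →L[ℝ] ℝ}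
    (hy : ∀ i, IsPosFunc (y i)) {v : F →L[ℝ] H} (hv : ∀ z : F, 0 ≤ z → 0 ≤ v z) :
    posBidualBallSup r (fun i => (y i).comp v) ≤ ‖v‖ * posBidualBallSup r y := by
  have : Nonempty {Φ : (F →L[ℝ] ℝ) →L[ℝ] ℝ // ‖Φ‖ ≤ 1 ∧ ∀ g, IsPosFunc g → 0 ≤ Φ g} :=
    ⟨⟨0, by rw [ContinuousLinearMap.opNorm_zero]; exact zero_le_one, fun _ _ => le_rfl⟩⟩
  refine ciSup_le fun ⟨Φ, hball, hpos⟩ => ?_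
  -- `Φ ∘ v*`, where `v* g = g ∘ v` is the adjoint of `v`
  let Φv := Φ.comp ((ContinuousLinearMap.compL ℝ F H ℝ).flip v)
  have hΦv : ‖Φv‖ ≤ ‖v‖ := by
    refine ContinuousLinearMap.opNorm_le_bound _ (norm_nonneg v) fun g => ?_
    calc ‖Φ (g.comp v)‖ ≤ ‖Φ‖ * ‖g.comp v‖ := Φ.le_opNorm _
      _ ≤ 1 * (‖g‖ * ‖v‖) := by gcongr; exact g.opNorm_comp_le v
      _ = ‖v‖ * ‖g‖ := by ring
  exact sum_le_mul_posBidualBallSup hr hΦv (fun g hg => hpos _ fun z hz => hg _ (hv z hz)) hy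

theorem PWDPolyC.comp {M : ContinuousMultilinearMap ℝ (fun _ : Fin m => E) F} {C : ℝ}
    (hC0 : 0 ≤ C) (hC : PWDPolyC m p q r M C) (hq : 0 < q) (hr : 0 < r)
    {u : G →L[ℝ] E} (hu : ∀ z : G, 0 ≤ z → 0 ≤ u z)
    {v : F →L[ℝ] H} (hv : ∀ z : F, 0 ≤ z → 0 ≤ v z) :
    PWDPolyC m p q r ((v.compContinuousMultilinearMap M).compContinuousLinearMap fun _ => u)
      (‖v‖ * C * ‖u‖ ^ m) := by
  intro n x y hx hy
  have hux : ∀ i, 0 ≤ u (x i) := fun i => hu _ (hx i)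
  have hyv : ∀ i, IsPosFunc ((y i).comp v) := fun i z hz => hy i _ (hv z hz)
  calc (∑ i, ((y i).comp v (M fun _ => u (x i))) ^ p) ^ (1 / p)
      ≤ C * posPolyBallSup m q (fun i => u (x i)) * posBidualBallSup r (fun i => (y i).comp v) :=
        hC n _ _ hux hyv
    _ ≤ C * (‖u‖ ^ m * posPolyBallSup m q x) * (‖v‖ * posBidualBallSup r y) := by
        have := posPolyBallSup_nonneg (m := m) (q := q) hx
        have := posBidualBallSup_nonneg (r := r) hyv
        gcongr
        · exact posPolyBallSup_comp_le hq hx hu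
        · exact posBidualBallSup_comp_le hr hy hv
    _ = ‖v‖ * C * ‖u‖ ^ m * posPolyBallSup m q x * posBidualBallSup r y := by ring

open scoped Pointwise in
theorem dplusPoly_comp_le {M : ContinuousMultilinearMap ℝ (fun _ : Fin m => E) F}
    (hM : ∃ C, 0 ≤ C ∧ PWDPolyC m p q r M C) (hq : 0 < q) (hr : 0 < r)
    {u : G →L[ℝ] E} (hu : ∀ z : G, 0 ≤ z → 0 ≤ u z)
    {v : F →L[ℝ] H} (hv : ∀ z : F, 0 ≤ z → 0 ≤ v z) :
    dplusPoly m p q r ((v.compContinuousMultilinearMap M).compContinuousLinearMap fun _ => u) ≤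
      ‖v‖ * dplusPoly m p q r M * ‖u‖ ^ m := by
  have ha : 0 ≤ ‖v‖ * ‖u‖ ^ m := by positivity
  calc dplusPoly m p q r ((v.compContinuousMultilinearMap M).compContinuousLinearMap fun _ => u)
      ≤ sInf ((‖v‖ * ‖u‖ ^ m) • {C : ℝ | 0 ≤ C ∧ PWDPolyC m p q r M C}) := by
        refine csInf_le_csInf ⟨0, fun _ hC => hC.1⟩ (Set.Nonempty.smul_set hM) ?_
        rintro _ ⟨C, ⟨hC0, hC⟩, rfl⟩
        refine ⟨mul_nonneg ha hC0, ?_⟩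
        simpa only [smul_eq_mul, mul_right_comm] using hC.comp hC0 hq hr hu hv
    _ = ‖v‖ * dplusPoly m p q r M * ‖u‖ ^ m := by
        rw [Real.sInf_smul_of_nonneg ha, smul_eq_mul, dplusPoly]; ring

end Composition

theorem pwd_poly_comp_general {E F G H : Type*}
    [NormedAddCommGroup E] [Lattice E] [HasSolidNorm E] [IsOrderedAddMonoid E] [NormedSpace ℝ E]
    [NormedAddCommGroup F] [Lattice F] [HasSolidNorm F] [IsOrderedAddMonoid F] [NormedSpace ℝ F]
    [NormedAddCommGroup G] [Lattice G] [HasSolidNorm G] [IsOrderedAddMonoid G] [NormedSpace ℝ G]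
    [NormedAddCommGroup H] [Lattice H] [HasSolidNorm H] [IsOrderedAddMonoid H] [NormedSpace ℝ H]
    (m : ℕ) (p q r : ℝ) (hq : 1 ≤ q) (hr : 1 ≤ r)
    (M : ContinuousMultilinearMap ℝ (fun _ : Fin m => E) F)
    (hM : ∃ C, 0 ≤ C ∧ PWDPolyC m p q r M C)
    (u : G →L[ℝ] E) (hu : ∀ z : G, 0 ≤ z → 0 ≤ u z)
    (v : F →L[ℝ] H) (hv : ∀ z : F, 0 ≤ z → 0 ≤ v z) :
    (∃ C, 0 ≤ C ∧ PWDPolyC m p q r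
        ((v.compContinuousMultilinearMap M).compContinuousLinearMap (fun _ => u)) C) ∧
      dplusPoly m p q r
          ((v.compContinuousMultilinearMap M).compContinuousLinearMap (fun _ => u)) ≤
        ‖v‖ * dplusPoly m p q r M * ‖u‖ ^ m := by
  have hq0 : 0 < q := one_pos.trans_le hq
  have hr0 : 0 < r := one_pos.trans_le hr
  refine ⟨?_, dplusPoly_comp_le hM hq0 hr0 hu hv⟩
  obtain ⟨C, hC0, hC⟩ := hM
  exact ⟨‖v‖ * C * ‖u‖ ^ m, by positivity, hC.comp hC0 hq0 hr0 hu hv⟩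

/-- If `P` is a positive weakly `(q,r)`-dominated `m`-homogeneous polynomial and `u`, `v`
are positive bounded linear operators, then `v ∘ P ∘ u` is positive weakly
`(q,r)`-dominated and `d⁺(v ∘ P ∘ u) ≤ ‖v‖ · d⁺(P) · ‖u‖^m`. -/
theorem pwd_poly_comp {E F G H : Type*}
    [NormedAddCommGroup E] [Lattice E] [HasSolidNorm E] [IsOrderedAddMonoid E] [NormedSpace ℝ E] [CompleteSpace E]
    [NormedAddCommGroup F] [Lattice F] [HasSolidNorm F] [IsOrderedAddMonoid F] [NormedSpace ℝ F] [CompleteSpace F]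
    [NormedAddCommGroup G] [Lattice G] [HasSolidNorm G] [IsOrderedAddMonoid G] [NormedSpace ℝ G] [CompleteSpace G]
    [NormedAddCommGroup H] [Lattice H] [HasSolidNorm H] [IsOrderedAddMonoid H] [NormedSpace ℝ H] [CompleteSpace H]
    (m : ℕ) (p q r : ℝ) (hp : 1 ≤ p) (hq : 1 ≤ q) (hr : 1 ≤ r)
    (hpqr : 1 / p = 1 / q + 1 / r)
    (M : ContinuousMultilinearMap ℝ (fun _ : Fin m => E) F)
    (hM : ∃ C, 0 ≤ C ∧ PWDPolyC m p q r M C)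
    (u : G →L[ℝ] E) (hu : ∀ z : G, 0 ≤ z → 0 ≤ u z)
    (v : F →L[ℝ] H) (hv : ∀ z : F, 0 ≤ z → 0 ≤ v z) :
    (∃ C, 0 ≤ C ∧ PWDPolyC m p q r
        ((v.compContinuousMultilinearMap M).compContinuousLinearMap (fun _ => u)) C) ∧
      dplusPoly m p q r
          ((v.compContinuousMultilinearMap M).compContinuousLinearMap (fun _ => u)) ≤
        ‖v‖ * dplusPoly m p q r M * ‖u‖ ^ m :=
  pwd_poly_comp_general m p q r hq hr M hM u hu v hv

end
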